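/- Let u_1, …, u_{j+1} be distinct elements of V with prefix sets S_i := {u_1, …, u_i} (S_0 = ∅), let p ≤ j and put Q := S_p. Let OPT ⊆ V with c(OPT) ≤ b, let o, o' ∈ OPT be distinct, and put OPT⋄ := OPT \ {o, o'}. Assume: (i) c(S_j) < c(OPT⋄) ≤ c(S_{j+1}); (ii) for every 0 ≤ i ≤ j and every v ∈ OPT⋄ \ S_i, f(u_{i+1} ∣ S_i) · c v ≥ f(v ∣ S_i) · c (u_{i+1}); (iii) for every v ∈ S_{j+1} \ Q, f(o ∣ Q) · c v ≥ f(v ∣ Q) · c o. Then for every real μ with μ ≥ f({o}) and μ ≥ f({o'}), it holds that μ ≥ f(OPT)/2 + (1/(2·(1 − 1/e))) · ( f(o ∣ Q) · (c(Q) + c(o) + c(o') − b)/c(o) − f(Q) ). -/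

import Mathlib

/-! Write `OPT⋄ = OPT \ {o, o'}`. By the greedy rule each step closes at least the fraction
`c(u_i) / c(OPT⋄)` of the gap `f(OPT⋄) - f(S_i)`; counting the last step `u_j` only
fractionally, so that exactly the cost `c(OPT⋄)` is spent, the gaps multiply to at most
`exp (-1)`, whence
`(1 - 1/e) f(OPT⋄) ≤ f(S_j) + f(u_j ∣ S_j) (c(OPT⋄) - c(S_j)) / c(u_j)`.
Since `o` has the best gain-per-cost at `Q = S_p` among `S_{j+1} \ Q`, submodularity bounds
every gain after `Q` in this expression by `f(o ∣ Q) / c(o)` per unit of cost, and the budget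
gives `c(OPT⋄) ≤ b - c(o) - c(o')`. Finally `f(OPT) ≤ f(OPT⋄) + f({o}) + f({o'})`. -/

open Finset

lemma Real.prod_one_sub_le_exp_neg_sum {ι : Type*} (s : Finset ι) {x : ι → ℝ}
    (hx : ∀ i ∈ s, x i ≤ 1) : ∏ i ∈ s, (1 - x i) ≤ Real.exp (-∑ i ∈ s, x i) := by
  rw [← sum_neg_distrib, Real.exp_sum]
  exact prod_le_prod (fun i hi => sub_nonneg.2 (hx i hi)) fun i _ => Real.one_sub_le_exp_neg _

lemma sub_le_sub_mul_prod_one_sub {F a : ℕ → ℝ} {M C : ℝ} (hC : 0 < C) :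
    ∀ n : ℕ, (∀ i < n, a i ≤ C) →
      (∀ i < n, (M - F i) * a i ≤ (F (i + 1) - F i) * C) →
      M - F n ≤ (M - F 0) * ∏ k ∈ range n, (1 - a k / C)
  | 0, _, _ => by simp
  | n + 1, ha, hstep => by
    have ih := sub_le_sub_mul_prod_one_sub hC n (fun i hi => ha i (by omega))
      (fun i hi => hstep i (by omega))
    have hfactor : 0 ≤ 1 - a n / C := by
      rw [sub_nonneg, div_le_one hC]; exact ha n n.lt_succ_self
    have hgain : (M - F n) * (a n / C) ≤ F (n + 1) - F n := by
      rw [← mul_div_assoc, div_le_iff₀ hC]; exact hstep n n.lt_succ_self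
    calc M - F (n + 1) ≤ (M - F n) * (1 - a n / C) := by linarith
      _ ≤ (M - F 0) * (∏ k ∈ range n, (1 - a k / C)) * (1 - a n / C) := by gcongr
      _ = (M - F 0) * ∏ k ∈ range (n + 1), (1 - a k / C) := by
        rw [prod_range_succ, mul_assoc]

lemma one_sub_inv_exp_mul_le_add_fraction {F a : ℕ → ℝ} {M C δ : ℝ} {j : ℕ}
    (hM : 0 ≤ M) (hF0 : F 0 = 0) (ha : ∀ k ≤ j, 0 < a k) (hsum : ∑ k ∈ range j, a k < C)
    (hstep : ∀ i < j, (M - F i) * a i ≤ (F (i + 1) - F i) * C)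
    (hlast : (M - F j) * a j ≤ δ * C) :
    (1 - 1 / Real.exp 1) * M ≤ F j + δ * (C - ∑ k ∈ range j, a k) / a j := by
  set A := ∑ k ∈ range j, a k
  have hA : 0 ≤ A := sum_nonneg fun k hk => (ha k (mem_range.1 hk).le).le
  have hC : 0 < C := hA.trans_lt hsum
  have hak : ∀ i < j, a i ≤ C := fun i hi =>
    (single_le_sum (fun k hk => (ha k (mem_range.1 hk).le).le) (mem_range.2 hi)).trans hsum.le
  set t := (C - A) / C
  have hdecay := sub_le_sub_mul_prod_one_sub hC j hak hstep
  rw [hF0, sub_zero] at hdecay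
  have hprod : ∏ k ∈ range j, (1 - a k / C) ≤ Real.exp (-(A / C)) := by
    rw [sum_div]
    exact Real.prod_one_sub_le_exp_neg_sum _ fun k hk =>
      (div_le_one hC).2 (hak k (mem_range.1 hk))
  have hexp : Real.exp (-(A / C)) * Real.exp (-t) = 1 / Real.exp 1 := by
    have hsplit : A / C + t = 1 := by simp only [t]; field_simp; ring
    rw [← Real.exp_add, one_div, ← Real.exp_neg, ← neg_add, hsplit]
  have hwhole : (M - F j) * (1 - t) ≤ M / Real.exp 1 := by
    have ht : 0 ≤ 1 - t := by
      rw [sub_nonneg, div_le_one hC]; linarith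
    calc (M - F j) * (1 - t) ≤ M * (∏ k ∈ range j, (1 - a k / C)) * (1 - t) := by gcongr
      _ ≤ M * Real.exp (-(A / C)) * Real.exp (-t) := by
        gcongr
        exact Real.one_sub_le_exp_neg t
      _ = M / Real.exp 1 := by rw [mul_assoc, hexp, mul_one_div]
  have hfraction : (M - F j) * t ≤ δ * (C - A) / a j := by
    have haj := ha j le_rfl
    rw [le_div_iff₀ haj]
    calc (M - F j) * t * a j = (M - F j) * a j * ((C - A) / C) := by ring
      _ ≤ δ * C * ((C - A) / C) := by gcongr
      _ = δ * (C - A) := by field_simp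
  have : (1 - 1 / Real.exp 1) * M = M - M / Real.exp 1 := by ring
  linarith

section Submodular

variable {V : Type*} [DecidableEq V]

def marginal (f : Finset V → ℝ) (v : V) (S : Finset V) : ℝ := f (insert v S) - f S

variable {f : Finset V → ℝ}

lemma marginal_nonneg (hmono : ∀ S T : Finset V, S ⊆ T → f S ≤ f T) (v : V) (S : Finset V) :
    0 ≤ marginal f v S :=
  sub_nonneg.2 (hmono _ _ (subset_insert v S))

variable (hmono : ∀ S T : Finset V, S ⊆ T → f S ≤ f T)
  (hsub : ∀ S T : Finset V, f (S ∪ T) + f (S ∩ T) ≤ f S + f T)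
include hmono hsub

lemma marginal_anti {A B : Finset V} (hAB : A ⊆ B) (a : V) :
    marginal f a B ≤ marginal f a A := by
  have hunion : B ∪ insert a A = insert a B := by
    rw [union_insert, union_eq_left.2 hAB]
  have hinter : f A ≤ f (B ∩ insert a A) :=
    hmono _ _ (subset_inter hAB (subset_insert a A))
  have := hsub B (insert a A)
  rw [hunion] at this
  unfold marginal
  linarith

lemma le_add_sum_marginal (A B : Finset V) : f (A ∪ B) ≤ f A + ∑ v ∈ B, marginal f v A := by
  induction B using Finset.induction_on with
  | empty => simp
  | insert a B ha ih =>
    have hunion : (A ∪ B) ∪ insert a A = A ∪ insert a B := by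
      rw [union_insert, union_insert, union_right_comm, union_self]
    have hinter : f A ≤ f ((A ∪ B) ∩ insert a A) :=
      hmono _ _ (subset_inter subset_union_left (subset_insert a A))
    have := hsub (A ∪ B) (insert a A)
    rw [hunion] at this
    rw [sum_insert ha]
    unfold marginal at *
    linarith

lemma le_add_sum_singleton (hf0 : f ∅ = 0) (A B : Finset V) :
    f (A ∪ B) ≤ f A + ∑ v ∈ B, f {v} := by
  refine (le_add_sum_marginal hmono hsub A B).trans
    (add_le_add_right (sum_le_sum fun v _ => ?_) _)
  simpa [marginal, hf0] using marginal_anti hmono hsub (empty_subset A) v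

lemma sub_mul_le_marginal_mul_sum (c : V → ℝ) {a : V} (ha : 0 ≤ c a) {A T : Finset V}
    (hratio : ∀ v ∈ T, marginal f v A * c a ≤ marginal f a A * c v) :
    (f (A ∪ T) - f A) * c a ≤ marginal f a A * ∑ v ∈ T, c v := by
  have hgain := le_add_sum_marginal hmono hsub A T
  calc (f (A ∪ T) - f A) * c a ≤ (∑ v ∈ T, marginal f v A) * c a := by gcongr; linarith
    _ = ∑ v ∈ T, marginal f v A * c a := sum_mul ..
    _ ≤ ∑ v ∈ T, marginal f a A * c v := sum_le_sum hratio
    _ = marginal f a A * ∑ v ∈ T, c v := (mul_sum ..).symm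

lemma sub_mul_le_marginal_mul_sum_of_subset (c : V → ℝ) {a : V} (ha : 0 ≤ c a)
    {A B : Finset V} (hAB : A ⊆ B)
    (hratio : ∀ v ∈ B \ A, marginal f v A * c a ≤ marginal f a A * c v) :
    (f B - f A) * c a ≤ marginal f a A * (∑ v ∈ B, c v - ∑ v ∈ A, c v) := by
  rw [← sum_sdiff_eq_sub hAB]
  simpa [union_sdiff_of_subset hAB] using sub_mul_le_marginal_mul_sum hmono hsub c ha hratio

lemma sub_mul_le_marginal_mul_sum_of_ratio (c : V → ℝ) (hc : ∀ v, 0 ≤ c v) {a : V}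
    {A T : Finset V} (hratio : ∀ v ∈ T \ A, marginal f v A * c a ≤ marginal f a A * c v) :
    (f T - f A) * c a ≤ marginal f a A * ∑ v ∈ T, c v := by
  have hT : f T ≤ f (A ∪ (T \ A)) :=
    hmono _ _ (by rw [union_sdiff_self_eq_union]; exact subset_union_right)
  calc (f T - f A) * c a ≤ (f (A ∪ (T \ A)) - f A) * c a := by gcongr; exact hc a
    _ ≤ marginal f a A * ∑ v ∈ T \ A, c v :=
      sub_mul_le_marginal_mul_sum hmono hsub c (hc a) hratio
    _ ≤ marginal f a A * ∑ v ∈ T, c v := by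
      gcongr
      · exact marginal_nonneg hmono a A
      · exact fun v _ _ => hc v
      · exact sdiff_subset

end Submodular

section Greedy

variable {V : Type*} [DecidableEq V] {f : Finset V → ℝ}
  (hmono : ∀ S T : Finset V, S ⊆ T → f S ≤ f T)
  (hsub : ∀ S T : Finset V, f (S ∪ T) + f (S ∩ T) ≤ f S + f T) (hf0 : f ∅ = 0)
  {c : V → ℝ} (hc : ∀ v, 0 < c v) {u : ℕ → V} {S : ℕ → Finset V}
  (hS : ∀ i, S i = (range i).image u)
include hmono hsub hf0 hc hS

lemma one_sub_inv_exp_mul_le_greedy {j : ℕ} (hinj : Set.InjOn u (range j)) {T : Finset V}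
    (hcost : ∑ v ∈ S j, c v < ∑ v ∈ T, c v)
    (hrule : ∀ i ≤ j, ∀ v ∈ T \ S i,
      marginal f v (S i) * c (u i) ≤ marginal f (u i) (S i) * c v) :
    (1 - 1 / Real.exp 1) * f T ≤
      f (S j) + marginal f (u j) (S j) * (∑ v ∈ T, c v - ∑ v ∈ S j, c v) / c (u j) := by
  have hcost_eq : ∑ v ∈ S j, c v = ∑ k ∈ range j, c (u k) := by rw [hS, sum_image hinj]
  have hstep (i : ℕ) (hi : i ≤ j) :
      (f T - f (S i)) * c (u i) ≤ marginal f (u i) (S i) * ∑ v ∈ T, c v :=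
    sub_mul_le_marginal_mul_sum_of_ratio hmono hsub c (fun v => (hc v).le) (hrule i hi)
  rw [hcost_eq] at hcost ⊢
  refine one_sub_inv_exp_mul_le_add_fraction (F := fun i => f (S i)) (a := fun k => c (u k))
    (hf0 ▸ hmono _ _ (empty_subset T)) (by simp [hS, hf0]) (fun k _ => hc (u k)) hcost
    (fun i hi => ?_) (hstep j le_rfl)
  have hSsucc : S (i + 1) = insert (u i) (S i) := by rw [hS, hS, range_add_one, image_insert]
  simpa only [marginal, hSsucc] using hstep i hi.le

lemma one_sub_inv_exp_mul_mul_le_prefix {j p : ℕ} (hpj : p ≤ j)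
    (hinj : Set.InjOn u (range (j + 1))) {T : Finset V} {o : V}
    (hcost : ∑ v ∈ S j, c v < ∑ v ∈ T, c v)
    (hrule : ∀ i ≤ j, ∀ v ∈ T \ S i,
      marginal f v (S i) * c (u i) ≤ marginal f (u i) (S i) * c v)
    (hruleQ : ∀ v ∈ S (j + 1) \ S p, marginal f v (S p) * c o ≤ marginal f o (S p) * c v) :
    (1 - 1 / Real.exp 1) * f T * c o ≤
      f (S p) * c o + marginal f o (S p) * (∑ v ∈ T, c v - ∑ v ∈ S p, c v) := by
  have hSmono {i k : ℕ} (h : i ≤ k) : S i ⊆ S k := by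
    rw [hS, hS]; exact image_subset_image (range_subset_range.2 h)
  have hgreedy := one_sub_inv_exp_mul_le_greedy hmono hsub hf0 hc hS
    (hinj.mono (by simp)) hcost hrule
  have huj : u j ∈ S (j + 1) \ S p := by
    rw [mem_sdiff, hS, hS]
    refine ⟨mem_image_of_mem u (self_mem_range_succ j), fun hmem => ?_⟩
    obtain ⟨k, hk, hkj⟩ := mem_image.1 hmem
    have hk' := mem_range.1 hk
    have := hinj (by simp; omega) (by simp) hkj
    omega
  have hlast : marginal f (u j) (S j) * c o ≤ marginal f o (S p) * c (u j) :=
    (mul_le_mul_of_nonneg_right (marginal_anti hmono hsub (hSmono hpj) (u j)) (hc o).le).trans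
      (hruleQ _ huj)
  have hprefix := sub_mul_le_marginal_mul_sum_of_subset hmono hsub c (hc o).le (hSmono hpj)
    fun v hv => hruleQ v (sdiff_subset_sdiff (hSmono j.le_succ) le_rfl hv)
  have hfraction :
      marginal f (u j) (S j) * (∑ v ∈ T, c v - ∑ v ∈ S j, c v) / c (u j) * c o ≤
        marginal f o (S p) * (∑ v ∈ T, c v - ∑ v ∈ S j, c v) := by
    rw [div_mul_eq_mul_div, div_le_iff₀ (hc (u j))]
    have := mul_le_mul_of_nonneg_right hlast (sub_nonneg.2 hcost.le)
    linarith
  have := mul_le_mul_of_nonneg_right hgreedy (hc o).le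
  linarith

end Greedy

theorem stmt7_general {V : Type*} [DecidableEq V]
    (f : Finset V → ℝ) (c : V → ℝ) (b : ℝ)
    (hf0 : f ∅ = 0)
    (hmono : ∀ S T : Finset V, S ⊆ T → f S ≤ f T)
    (hsub : ∀ S T : Finset V, f (S ∪ T) + f (S ∩ T) ≤ f S + f T)
    (hcpos : ∀ v : V, 0 < c v)
    (j : ℕ) (u : ℕ → V)
    (hinj : ∀ i i' : ℕ, i < j + 1 → i' < j + 1 → u i = u i' → i = i')
    (S : ℕ → Finset V) (hS : ∀ i : ℕ, S i = (Finset.range i).image u)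
    (p : ℕ) (hpj : p ≤ j)
    (OPT : Finset V) (hOPTb : ∑ v ∈ OPT, c v ≤ b)
    (o o' : V) (ho : o ∈ OPT) (ho' : o' ∈ OPT) (hoo' : o ≠ o')
    (hsandwich : (∑ v ∈ S j, c v) < (∑ v ∈ OPT \ {o, o'}, c v) ∧
      (∑ v ∈ OPT \ {o, o'}, c v) ≤ ∑ v ∈ S (j + 1), c v)
    (hrule : ∀ i : ℕ, i ≤ j → ∀ v ∈ (OPT \ {o, o'}) \ S i,
      (f (insert (u i) (S i)) - f (S i)) * c v ≥
      (f (insert v (S i)) - f (S i)) * c (u i))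
    (hruleQ : ∀ v ∈ S (j + 1) \ S p,
      (f (insert o (S p)) - f (S p)) * c v ≥
      (f (insert v (S p)) - f (S p)) * c o) :
    ∀ μ : ℝ, μ ≥ f {o} → μ ≥ f {o'} →
      μ ≥ f OPT / 2 + (1 / (2 * (1 - 1 / Real.exp 1))) *
        ((f (insert o (S p)) - f (S p)) *
            ((∑ v ∈ S p, c v) + c o + c o' - b) / c o - f (S p)) := by
  intro μ hμo hμo'
  rw [show f (insert o (S p)) - f (S p) = marginal f o (S p) from rfl]
  have hpair : {o, o'} ⊆ OPT := insert_subset ho (singleton_subset_iff.2 ho')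
  have hkey := one_sub_inv_exp_mul_mul_le_prefix hmono hsub hf0 hcpos hS hpj
    (fun i hi i' hi' => hinj i i' (mem_range.1 hi) (mem_range.1 hi')) hsandwich.1 hrule hruleQ
  have hOPT : f OPT ≤ f (OPT \ {o, o'}) + (f {o} + f {o'}) := by
    have := le_add_sum_singleton hmono hsub hf0 (OPT \ {o, o'}) {o, o'}
    rwa [sdiff_union_of_subset hpair, sum_pair hoo'] at this
  have hbudget : ∑ v ∈ OPT \ {o, o'}, c v + (c o + c o') ≤ b := by
    rwa [← sum_pair hoo', sum_sdiff hpair]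
  set E := 1 - 1 / Real.exp 1
  have hE : 0 < E :=
    sub_pos.2 ((div_lt_one (Real.exp_pos 1)).2 (Real.one_lt_exp_iff.2 one_pos))
  have hterm : marginal f o (S p) * (∑ v ∈ S p, c v + c o + c o' - b) / c o - f (S p) ≤
      -(E * f (OPT \ {o, o'})) := by
    rw [div_sub' (hcpos o).ne', div_le_iff₀ (hcpos o)]
    linarith [mul_le_mul_of_nonneg_left hbudget (marginal_nonneg hmono o (S p))]
  have hscaled : 1 / (2 * E) *
      (marginal f o (S p) * (∑ v ∈ S p, c v + c o + c o' - b) / c o - f (S p)) ≤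
      -(f (OPT \ {o, o'}) / 2) :=
    calc _ ≤ 1 / (2 * E) * -(E * f (OPT \ {o, o'})) :=
          mul_le_mul_of_nonneg_left hterm (by positivity)
      _ = -(f (OPT \ {o, o'}) / 2) := by field_simp
  linarith

/-- Corollary 3.6: the largest singleton value satisfies
μ ≥ f(OPT)/2 + (1/(2(1−1/e)))·( f(o∣Q)·(c(Q)+c(o)+c(o')−b)/c(o) − f(Q) ). -/
theorem stmt7 {V : Type*} [Fintype V] [DecidableEq V]
    (f : Finset V → ℝ) (c : V → ℝ) (b : ℝ)
    (hf0 : f ∅ = 0)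
    (hmono : ∀ S T : Finset V, S ⊆ T → f S ≤ f T)
    (hsub : ∀ S T : Finset V, f (S ∪ T) + f (S ∩ T) ≤ f S + f T)
    (hcpos : ∀ v : V, 0 < c v)
    (hb : 0 < b)
    (j : ℕ) (u : ℕ → V)
    (hinj : ∀ i i' : ℕ, i < j + 1 → i' < j + 1 → u i = u i' → i = i')
    (S : ℕ → Finset V) (hS : ∀ i : ℕ, S i = (Finset.range i).image u)
    (p : ℕ) (hpj : p ≤ j)
    (OPT : Finset V) (hOPTb : ∑ v ∈ OPT, c v ≤ b)
    (o o' : V) (ho : o ∈ OPT) (ho' : o' ∈ OPT) (hoo' : o ≠ o')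
    (hsandwich : (∑ v ∈ S j, c v) < (∑ v ∈ OPT \ {o, o'}, c v) ∧
      (∑ v ∈ OPT \ {o, o'}, c v) ≤ ∑ v ∈ S (j + 1), c v)
    (hrule : ∀ i : ℕ, i ≤ j → ∀ v ∈ (OPT \ {o, o'}) \ S i,
      (f (insert (u i) (S i)) - f (S i)) * c v ≥
      (f (insert v (S i)) - f (S i)) * c (u i))
    (hruleQ : ∀ v ∈ S (j + 1) \ S p,
      (f (insert o (S p)) - f (S p)) * c v ≥
      (f (insert v (S p)) - f (S p)) * c o) :
    ∀ μ : ℝ, μ ≥ f {o} → μ ≥ f {o'} →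
      μ ≥ f OPT / 2 + (1 / (2 * (1 - 1 / Real.exp 1))) *
        ((f (insert o (S p)) - f (S p)) *
            ((∑ v ∈ S p, c v) + c o + c o' - b) / c o - f (S p)) :=
  stmt7_general f c b hf0 hmono hsub hcpos j u hinj S hS p hpj OPT hOPTb o o' ho ho' hoo' hsandwich
    hrule hruleQ
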